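/- Let (L, [·,·], α, β) be a regular BiHom-Lie algebra and D ∈ C¹_{α,β}(L;L) a linear map commuting with α and β. Then D is a 1-cocycle for the α^s β^t-adjoint representation (i.e. d_{s,t}D = 0, equivalently D([α⁻¹β(u), v]) = [α^{s+1}β^t(u), D(v)] − [α^{s+1}β^t(v), D(u)] for all u, v) if and only if D is an α^{s+2}β^{t−1}-derivation of L. -/

import Mathlib

/-!
Put `θ = αβ⁻¹`. Since `α` and `β` commute, `α^{s+1}β^t θ = θ α^{s+1}β^t = α^{s+2}β^{t-1}` and
`α⁻¹β = θ⁻¹`, while BiHom skew-symmetry `[β a, α a'] = -[β a', α a]` says exactly that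
`[x, θ y] = -[y, θ x]`. Evaluating the cocycle condition at `(θ u, v)` and moving `θ` across the
bracket in its middle term turns it, term by term, into the derivation identity at `(u, v)`;
as `θ` is bijective, the two conditions are equivalent.
-/

section TwistedBracket

variable {L : Type*} [AddCommGroup L]

def IsTwistedDerivation (br : L → L → L) (σ D : L → L) : Prop :=
  ∀ u v, D (br u v) = br (D u) (σ v) + br (σ u) (D v)

def IsAdjointCocycle (br : L → L → L) (A γ D : L → L) : Prop :=
  ∀ u v, -br (A u) (D v) + br (A v) (D u) + D (br (γ u) v) = 0

variable (br : L → L → L) {A B D θ γ : L → L}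

theorem isAdjointCocycle_apply_iff (hskew : ∀ x y, br x (θ y) = -br y (θ x))
    (hD : Function.Commute D θ) (hAθ : ∀ v, A (θ v) = B v) (hθA : ∀ v, θ (A v) = B v)
    (hγ : Function.LeftInverse γ θ) (u v : L) :
    -br (A (θ u)) (D v) + br (A v) (D (θ u)) + D (br (γ (θ u)) v) = 0 ↔
      D (br u v) = br (D u) (B v) + br (B u) (D v) := by
  rw [hAθ, hD u, hskew, hθA, hγ u]
  exact ⟨fun h ↦ by rw [← sub_eq_zero, ← h]; abel, fun h ↦ by rw [h]; abel⟩

theorem isAdjointCocycle_iff_isTwistedDerivation (hskew : ∀ x y, br x (θ y) = -br y (θ x))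
    (hD : Function.Commute D θ) (hAθ : ∀ v, A (θ v) = B v) (hθA : ∀ v, θ (A v) = B v)
    (hγ : Function.LeftInverse γ θ) (hθ : Function.Surjective θ) :
    IsAdjointCocycle br A γ D ↔ IsTwistedDerivation br B D := by
  unfold IsAdjointCocycle IsTwistedDerivation
  rw [hθ.forall]
  exact forall_congr' fun u ↦ forall_congr' <|
    isAdjointCocycle_apply_iff br hskew hD hAθ hθA hγ u

end TwistedBracket

section CommutingPair

variable {G : Type*} [Group G] {a b : G}

theorem Commute.zpow_mul_zpow_mul_mul_inv (hc : Commute a b) (m n : ℤ) :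
    a ^ m * b ^ n * (a * b⁻¹) = a ^ (m + 1) * b ^ (n - 1) := by
  rw [mul_assoc, ← mul_assoc (b ^ n), (hc.symm.zpow_left n).eq]
  group

theorem Commute.mul_inv_zpow_mul_zpow (hc : Commute a b) (m n : ℤ) :
    Commute (a * b⁻¹) (a ^ m * b ^ n) :=
  ((Commute.self_zpow a m).mul_right (hc.zpow_right n)).mul_left
    ((hc.inv_right.symm.zpow_right m).mul_right ((Commute.self_zpow b n).inv_left))

theorem Commute.inv_mul_mul_mul_inv (hc : Commute a b) : a⁻¹ * b * (a * b⁻¹) = 1 := by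
  rw [hc.inv_left.eq]
  group

end CommutingPair

theorem stmt_16_general {K : Type*} [Field K] {L : Type*} [AddCommGroup L] [Module K L]
(br : L →ₗ[K] L →ₗ[K] L) (α β : L ≃ₗ[K] L)
    (hcomm : ∀ a, α (β a) = β (α a))
    (hskew : ∀ a a', br (β a) (α a') = - br (β a') (α a))
    (s t : ℤ) (D : L →ₗ[K] L)
    (hDα : ∀ v, D (α v) = α (D v)) (hDβ : ∀ v, D (β v) = β (D v)) :
    (∀ u v, - br ((α ^ (s + 1) * β ^ t) u) (D v) + br ((α ^ (s + 1) * β ^ t) v) (D u)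
        + D (br ((α⁻¹ * β) u) v) = 0) ↔
    (∀ u v, D (br u v) = br (D u) ((α ^ (s + 2) * β ^ (t - 1)) v)
        + br ((α ^ (s + 2) * β ^ (t - 1)) u) (D v)) := by
  have hc : Commute α β := LinearEquiv.ext hcomm
  have hAθ : α ^ (s + 1) * β ^ t * (α * β⁻¹) = α ^ (s + 2) * β ^ (t - 1) := by
    rw [hc.zpow_mul_zpow_mul_mul_inv, add_assoc, one_add_one_eq_two]
  have hθA : α * β⁻¹ * (α ^ (s + 1) * β ^ t) = α ^ (s + 2) * β ^ (t - 1) := by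
    rw [(hc.mul_inv_zpow_mul_zpow _ _).eq, hAθ]
  have hskewθ : ∀ x y, br x ((α * β⁻¹) y) = -br y ((α * β⁻¹) x) := fun x y ↦ by
    simpa using hskew (β⁻¹ x) (β⁻¹ y)
  have hDθ : Function.Commute D (α * β⁻¹) :=
    (show Function.Commute D α from hDα).comp_right <|
      (show Function.Commute D β from hDβ).inverses_right β.right_inv β.left_inv
  exact isAdjointCocycle_iff_isTwistedDerivation (fun x y ↦ br x y) hskewθ hDθ
    (LinearEquiv.congr_fun hAθ) (LinearEquiv.congr_fun hθA)
    (LinearEquiv.congr_fun hc.inv_mul_mul_mul_inv)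
    (α * β⁻¹).surjective

/-- `D ∈ C¹_{α,β}(L;L)` is a 1-cocycle of the `αˢβᵗ`-adjoint representation
iff `D` is an `α^{s+2}β^{t-1}`-derivation. -/
theorem stmt_16 {K : Type*} [Field K] {L : Type*} [AddCommGroup L] [Module K L]
(br : L →ₗ[K] L →ₗ[K] L) (α β : L ≃ₗ[K] L)
    (hcomm : ∀ a, α (β a) = β (α a))
    (hαm : ∀ a b, α (br a b) = br (α a) (α b))
    (hβm : ∀ a b, β (br a b) = br (β a) (β b))
    (hskew : ∀ a a', br (β a) (α a') = - br (β a') (α a))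
    (hjac : ∀ a a' a'', br (β (β a)) (br (β a') (α a''))
      + br (β (β a')) (br (β a'') (α a))
      + br (β (β a'')) (br (β a) (α a')) = 0)
    (s t : ℤ) (D : L →ₗ[K] L)
    (hDα : ∀ v, D (α v) = α (D v)) (hDβ : ∀ v, D (β v) = β (D v)) :
    (∀ u v, - br ((α ^ (s + 1) * β ^ t) u) (D v) + br ((α ^ (s + 1) * β ^ t) v) (D u)
        + D (br ((α⁻¹ * β) u) v) = 0) ↔
    (∀ u v, D (br u v) = br (D u) ((α ^ (s + 2) * β ^ (t - 1)) v)
        + br ((α ^ (s + 2) * β ^ (t - 1)) u) (D v)) :=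
  stmt_16_general br α β hcomm hskew s t D hDα hDβ
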